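/- arXiv:2309.10298 — 3 statements merged into one kernel-verified Lean document; each statement's English description precedes it below -/
import Mathlib

section
/- Let μ > 0 and R > 0, and let r : [0,∞) → ℝ be differentiable with r'(t) = μ(1 − r(t)²/R²)·r(t) for all t ≥ 0 and r(0) > 0. Then r(t) > 0 for all t ≥ 0 and r(t) → R as t → ∞. -/
/-!
Below any level `c ∈ (0, min (r 0) R)` the vector field is positive, so `c` is a lower barrier and
`r` stays positive. Away from `0` the substitution `u = 1 / r²` linearises the equation to
`u' = -2μ (u - 1 / R²)`, hence `(1 / r² - 1 / R²) e^{2μt}` is constant and `1 / r² → 1 / R²`.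
-/

open Filter Set Topology Real

theorem const_le_image_of_deriv_pos_at_level {r r' : ℝ → ℝ} {a c : ℝ}
    (hr : ∀ t ∈ Ici a, HasDerivWithinAt r (r' t) (Ici a) t) (ha : c ≤ r a)
    (hc : ∀ t ∈ Ici a, r t = c → 0 < r' t) : ∀ t ∈ Ici a, c ≤ r t := by
  intro t ht
  have hneg : ∀ s ∈ Ici a, HasDerivWithinAt (fun s => -r s) (-r' s) (Ici a) s :=
    fun s hs => (hr s hs).neg
  have := image_le_of_deriv_right_lt_deriv_boundary (B := fun _ => -c) (B' := 0)
    (fun s hs => (hneg s (Icc_subset_Ici_self hs)).continuousWithinAt.mono Icc_subset_Ici_self)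
    (fun s hs => (hneg s hs.1).mono (Ici_subset_Ici.2 hs.1)) (neg_le_neg ha)
    (fun _ => hasDerivAt_const _ _)
    (fun s hs hs' => by simpa using hc s hs.1 (neg_inj.1 hs')) (right_mem_Icc.2 ht)
  exact neg_le_neg_iff.1 this

noncomputable def radialInvariant (μ R : ℝ) (r : ℝ → ℝ) (t : ℝ) : ℝ :=
  ((r t ^ 2)⁻¹ - (R ^ 2)⁻¹) * exp (2 * μ * t)

theorem hasDerivWithinAt_radialInvariant {μ R x : ℝ} {r : ℝ → ℝ} {s : Set ℝ}
    (hR : R ≠ 0) (hx : r x ≠ 0)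
    (hr : HasDerivWithinAt r (μ * (1 - r x ^ 2 / R ^ 2) * r x) s x) :
    HasDerivWithinAt (radialInvariant μ R r) 0 s x := by
  refine ((((hr.fun_pow 2).inv (pow_ne_zero 2 hx)).sub_const (R ^ 2)⁻¹).mul
    ((hasDerivAt_id x).const_mul (2 * μ)).exp.hasDerivWithinAt).congr_deriv ?_
  simp only [Pi.inv_apply, id]
  field_simp
  ring

theorem radialInvariant_eq {μ R a : ℝ} {r : ℝ → ℝ} (hR : R ≠ 0)
    (hr : ∀ t ∈ Ici a, HasDerivWithinAt r (μ * (1 - r t ^ 2 / R ^ 2) * r t) (Ici a) t)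
    (hne : ∀ t ∈ Ici a, r t ≠ 0) :
    ∀ t ∈ Ici a, radialInvariant μ R r t = radialInvariant μ R r a := by
  have hderiv : ∀ t ∈ Ici a, HasDerivWithinAt (radialInvariant μ R r) 0 (Ici a) t :=
    fun t ht => hasDerivWithinAt_radialInvariant hR (hne t ht) (hr t ht)
  intro t ht
  exact constant_of_has_deriv_right_zero
    (fun s hs => (hderiv s (Icc_subset_Ici_self hs)).continuousWithinAt.mono Icc_subset_Ici_self)
    (fun s hs => (hderiv s hs.1).mono (Ici_subset_Ici.2 hs.1)) t (right_mem_Icc.2 ht)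

theorem tendsto_sq_of_radialInvariant_eq {μ R C : ℝ} {r : ℝ → ℝ} (hμ : 0 < μ) (hR : R ≠ 0)
    (h : ∀ᶠ t in atTop, radialInvariant μ R r t = C) :
    Tendsto (fun t => r t ^ 2) atTop (𝓝 (R ^ 2)) := by
  have hexp : Tendsto (fun t => exp (-(2 * μ * t))) atTop (𝓝 0) :=
    tendsto_exp_neg_atTop_nhds_zero.comp (tendsto_id.const_mul_atTop (by positivity))
  have hinv : Tendsto (fun t => (r t ^ 2)⁻¹) atTop (𝓝 (R ^ 2)⁻¹) := by
    have := (hexp.const_mul C).const_add (R ^ 2)⁻¹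
    rw [mul_zero, add_zero] at this
    refine this.congr' (h.mono fun t ht => ?_)
    rw [← ht, radialInvariant, mul_assoc, ← exp_add]
    simp
  simpa using hinv.inv₀ (inv_ne_zero (pow_ne_zero 2 hR))

/-- For `μ > 0`, `R > 0`, a solution on `[0,∞)` of `ṙ = μ(1 − r²/R²)r` with
`r(0) > 0` stays positive and converges to `R` as `t → ∞`. -/
theorem radial_ode_converges_to_R
    (μ R : ℝ) (hμ : 0 < μ) (hR : 0 < R)
    (r : ℝ → ℝ)
    (hode : ∀ t ∈ Set.Ici (0 : ℝ),
      HasDerivWithinAt r (μ * (1 - (r t) ^ 2 / R ^ 2) * r t) (Set.Ici (0 : ℝ)) t)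
    (h0 : 0 < r 0) :
    (∀ t : ℝ, 0 ≤ t → 0 < r t) ∧
    Tendsto r atTop (nhds R) := by
  obtain ⟨c, hc0, hc⟩ := exists_between (lt_min h0 hR)
  have hcR : c ^ 2 / R ^ 2 < 1 := (div_lt_one (by positivity)).2 <|
    pow_lt_pow_left₀ (hc.trans_le (min_le_right _ _)) hc0.le two_ne_zero
  have hpos : ∀ t, 0 ≤ t → 0 < r t := fun t ht =>
    hc0.trans_le <| const_le_image_of_deriv_pos_at_level hode (hc.le.trans (min_le_left _ _))
      (fun s _ hs => by rw [hs]; exact mul_pos (mul_pos hμ (sub_pos.2 hcR)) hc0) t ht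
  refine ⟨hpos, ?_⟩
  have hsq := tendsto_sq_of_radialInvariant_eq hμ hR.ne' (eventually_atTop.2
    ⟨0, radialInvariant_eq hR.ne' hode fun t ht => (hpos t ht).ne'⟩)
  have hsqrt := (continuous_sqrt.tendsto _).comp hsq
  rw [sqrt_sq hR.le] at hsqrt
  exact hsqrt.congr' (eventually_atTop.2 ⟨0, fun t ht => sqrt_sq (hpos t ht).le⟩)
end

section
/- Let μ > 0, α > 0, R > 0, and let r₀ > 0, ω₀ ∈ ℝ, y₀ ∈ ℝ. Define r(t) = R·r₀·e^{μt} / √(R² + r₀²(e^{2μt} − 1)) and X : [0,∞) → ℝ³ by X(t) = (r(t)·cos(t+ω₀), y₀·e^{−αt}, r(t)·sin(t+ω₀)). Then X(0) = (r₀ cos ω₀, y₀, r₀ sin ω₀), X satisfies the base system for all t ≥ 0 (writing X(t) = (x(t), y(t), z(t)): x'(t) = −z(t) + μ(1 − (x(t)²+z(t)²)/R²)x(t), y'(t) = −α y(t), z'(t) = x(t) + μ(1 − (x(t)²+z(t)²)/R²)z(t)), and the Euclidean distance from X(t) to the set L = {(x,y,z) ∈ ℝ³ : x² + z² = R², y =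 0} tends to 0 as t → ∞. -/
open Filter Real

/-! In polar coordinates `(ρ, θ)` of the `xz`-plane the system decouples into the logistic
equation `ρ' = μ (1 - ρ² / R²) ρ`, the uniform rotation `θ' = 1` and `y' = -α y`. The radius
`r` is the explicit solution of the logistic equation, so it tends to `R`, while `y` decays.
The point of `L` with the same angle is at distance `√((r - R)² + y²)`, which bounds the
distance to `L` and tends to `0`. -/

noncomputable def logisticRadius (μ R r₀ t : ℝ) : ℝ :=
  R * r₀ * exp (μ * t) / √(R ^ 2 + r₀ ^ 2 * (exp (2 * μ * t) - 1))

def limitCycle (R : ℝ) : Set (EuclideanSpace ℝ (Fin 3)) :=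
  {p | p 0 ^ 2 + p 2 ^ 2 = R ^ 2 ∧ p 1 = 0}

section LogisticRadius

variable {μ R r₀ t : ℝ}

theorem logisticRadius_zero (hR : 0 < R) : logisticRadius μ R r₀ 0 = r₀ := by
  simp [logisticRadius, sqrt_sq hR.le, hR.ne']

theorem logisticRadius_denom_pos (hR : R ≠ 0) (hμ : 0 ≤ μ) (ht : 0 ≤ t) :
    0 < R ^ 2 + r₀ ^ 2 * (exp (2 * μ * t) - 1) := by
  have : 0 ≤ exp (2 * μ * t) - 1 := sub_nonneg.2 (one_le_exp (by positivity))
  positivity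

theorem hasDerivAt_logisticRadius (hR : R ≠ 0)
    (hD : 0 < R ^ 2 + r₀ ^ 2 * (exp (2 * μ * t) - 1)) :
    HasDerivAt (logisticRadius μ R r₀)
      (μ * (1 - logisticRadius μ R r₀ t ^ 2 / R ^ 2) * logisticRadius μ R r₀ t) t := by
  have hnum := ((hasDerivAt_id' t).const_mul μ).exp.const_mul (R * r₀)
  have hden := (((((hasDerivAt_id' t).const_mul (2 * μ)).exp.sub_const 1).const_mul
    (r₀ ^ 2)).const_add (R ^ 2)).sqrt hD.ne'
  have hS := (sqrt_pos.2 hD).ne'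
  refine (hnum.div hden hS).congr_deriv ?_
  have hexp : exp (2 * μ * t) = exp (μ * t) ^ 2 := by rw [← exp_nat_mul]; ring_nf
  simp only [logisticRadius]
  rw [hexp] at hS ⊢
  field_simp

theorem logisticRadius_eq_div_sqrt (μ R r₀ t : ℝ) :
    logisticRadius μ R r₀ t = R * r₀ / √(r₀ ^ 2 + (R ^ 2 - r₀ ^ 2) * exp (-(2 * μ * t))) := by
  have hsplit : R ^ 2 + r₀ ^ 2 * (exp (2 * μ * t) - 1) =
      exp (μ * t) ^ 2 * (r₀ ^ 2 + (R ^ 2 - r₀ ^ 2) * exp (-(2 * μ * t))) := by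
    rw [← exp_nat_mul, exp_neg]
    field_simp
    ring_nf
  rw [logisticRadius, hsplit, sqrt_mul (by positivity), sqrt_sq (exp_pos _).le]
  field_simp

theorem tendsto_logisticRadius (hμ : 0 < μ) (hr₀ : 0 < r₀) :
    Tendsto (logisticRadius μ R r₀) atTop (nhds R) := by
  have hexp : Tendsto (fun t => exp (-(2 * μ * t))) atTop (nhds 0) :=
    tendsto_exp_neg_atTop_nhds_zero.comp (tendsto_id.const_mul_atTop (by positivity))
  have hroot : √(r₀ ^ 2 + (R ^ 2 - r₀ ^ 2) * 0) = r₀ := by simp [sqrt_sq hr₀.le]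
  have hlim := (tendsto_const_nhds (x := R * r₀)).div
    ((tendsto_const_nhds.add (hexp.const_mul (R ^ 2 - r₀ ^ 2))).sqrt) (hroot ▸ hr₀.ne')
  rw [hroot, mul_div_cancel_right₀ R hr₀.ne'] at hlim
  exact hlim.congr fun t => (logisticRadius_eq_div_sqrt μ R r₀ t).symm

end LogisticRadius

section Rotation

variable {ρ : ℝ → ℝ} {g t : ℝ}

theorem HasDerivAt.mul_cos_add (ω : ℝ) (h : HasDerivAt ρ (g * ρ t) t) :
    HasDerivAt (fun s => ρ s * Real.cos (s + ω))
      (-(ρ t * Real.sin (t + ω)) + g * (ρ t * Real.cos (t + ω))) t :=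
  (h.mul ((hasDerivAt_id' t).add_const ω).cos).congr_deriv (by ring)

theorem HasDerivAt.mul_sin_add (ω : ℝ) (h : HasDerivAt ρ (g * ρ t) t) :
    HasDerivAt (fun s => ρ s * Real.sin (s + ω))
      (ρ t * Real.cos (t + ω) + g * (ρ t * Real.sin (t + ω))) t :=
  (h.mul ((hasDerivAt_id' t).add_const ω).sin).congr_deriv (by ring)

end Rotation

theorem infDist_limitCycle_le (R ρ θ : ℝ) {p : EuclideanSpace ℝ (Fin 3)}
    (h0 : p 0 = ρ * cos θ) (h2 : p 2 = ρ * sin θ) :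
    Metric.infDist p (limitCycle R) ≤ √((ρ - R) ^ 2 + p 1 ^ 2) := by
  let q : EuclideanSpace ℝ (Fin 3) := !₂[R * cos θ, 0, R * sin θ]
  have hq : q ∈ limitCycle R := by
    refine ⟨?_, rfl⟩
    simp only [q, Matrix.cons_val]
    linear_combination R ^ 2 * sin_sq_add_cos_sq θ
  refine (Metric.infDist_le_dist_of_mem hq).trans_eq ?_
  rw [EuclideanSpace.dist_eq, Fin.sum_univ_three]
  simp only [Real.dist_eq, sq_abs, h0, h2, q, Matrix.cons_val]
  congr 1
  linear_combination (ρ - R) ^ 2 * sin_sq_add_cos_sq θ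

theorem tendsto_infDist_limitCycle {ι : Type*} {l : Filter ι} {R : ℝ}
    {X : ι → EuclideanSpace ℝ (Fin 3)} {ρ θ : ι → ℝ}
    (h0 : ∀ i, X i 0 = ρ i * cos (θ i)) (h2 : ∀ i, X i 2 = ρ i * sin (θ i))
    (hρ : Tendsto ρ l (nhds R)) (h1 : Tendsto (fun i => X i 1) l (nhds 0)) :
    Tendsto (fun i => Metric.infDist (X i) (limitCycle R)) l (nhds 0) := by
  have hbound : Tendsto (fun i => √((ρ i - R) ^ 2 + X i 1 ^ 2)) l (nhds 0) := by
    simpa using (((hρ.sub_const R).pow 2).add (h1.pow 2)).sqrt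
  exact squeeze_zero (fun _ => Metric.infDist_nonneg)
    (fun i => infDist_limitCycle_le R (ρ i) (θ i) (h0 i) (h2 i)) hbound

/-- The explicit trajectory
`X(t) = (r(t)cos(t+ω₀), y₀e^{−αt}, r(t)sin(t+ω₀))`, with
`r(t) = R r₀ e^{μt}/√(R² + r₀²(e^{2μt} − 1))`, starts at `(r₀cos ω₀, y₀, r₀sin ω₀)`,
satisfies the base system for `t ≥ 0`, and its Euclidean distance to the limit
cycle `L = {(x,y,z) : x² + z² = R², y = 0}` tends to `0` as `t → ∞`. -/
theorem base_system_trajectory_converges_to_limit_cycle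
    (μ α R r₀ ω₀ y₀ : ℝ) (hμ : 0 < μ) (hα : 0 < α) (hR : 0 < R) (hr₀ : 0 < r₀)
    (r : ℝ → ℝ)
    (hr : ∀ t : ℝ, r t =
      R * r₀ * Real.exp (μ * t) / Real.sqrt (R ^ 2 + r₀ ^ 2 * (Real.exp (2 * μ * t) - 1)))
    (X : ℝ → EuclideanSpace ℝ (Fin 3))
    (hX0 : ∀ t : ℝ, X t 0 = r t * Real.cos (t + ω₀))
    (hX1 : ∀ t : ℝ, X t 1 = y₀ * Real.exp (-α * t))
    (hX2 : ∀ t : ℝ, X t 2 = r t * Real.sin (t + ω₀)) :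
    (X 0 0 = r₀ * Real.cos ω₀ ∧ X 0 1 = y₀ ∧ X 0 2 = r₀ * Real.sin ω₀) ∧
    (∀ t : ℝ, 0 ≤ t →
      HasDerivAt (fun s => X s 0)
        (-(X t 2) + μ * (1 - ((X t 0) ^ 2 + (X t 2) ^ 2) / R ^ 2) * X t 0) t ∧
      HasDerivAt (fun s => X s 1) (-(α * X t 1)) t ∧
      HasDerivAt (fun s => X s 2)
        (X t 0 + μ * (1 - ((X t 0) ^ 2 + (X t 2) ^ 2) / R ^ 2) * X t 2) t) ∧
    Tendsto (fun t : ℝ =>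
        Metric.infDist (X t)
          {p : EuclideanSpace ℝ (Fin 3) | (p 0) ^ 2 + (p 2) ^ 2 = R ^ 2 ∧ p 1 = 0})
      atTop (nhds 0) := by
  obtain rfl : r = logisticRadius μ R r₀ := funext hr
  have hradius : ∀ t, X t 0 ^ 2 + X t 2 ^ 2 = logisticRadius μ R r₀ t ^ 2 := fun t => by
    rw [hX0, hX2]
    linear_combination logisticRadius μ R r₀ t ^ 2 * cos_sq_add_sin_sq (t + ω₀)
  have hradius_deriv : ∀ t, 0 ≤ t → HasDerivAt (logisticRadius μ R r₀)
      (μ * (1 - (X t 0 ^ 2 + X t 2 ^ 2) / R ^ 2) * logisticRadius μ R r₀ t) t := fun t ht => by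
    rw [hradius]
    exact hasDerivAt_logisticRadius hR.ne' (logisticRadius_denom_pos hR.ne' hμ.le ht)
  refine ⟨⟨?_, ?_, ?_⟩, fun t ht => ⟨?_, ?_, ?_⟩, ?_⟩
  · simp [hX0, logisticRadius_zero hR]
  · simp [hX1]
  · simp [hX2, logisticRadius_zero hR]
  · simpa only [← hX0, ← hX2] using (hradius_deriv t ht).mul_cos_add ω₀
  · simp only [hX1]
    exact (((hasDerivAt_id' t).const_mul (-α)).exp.const_mul y₀).congr_deriv (by ring)
  · simpa only [← hX0, ← hX2] using (hradius_deriv t ht).mul_sin_add ω₀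
  · have hy : Tendsto (fun t => X t 1) atTop (nhds 0) := by
      simpa [hX1] using
        (tendsto_exp_atBot.comp (tendsto_id.const_mul_atTop_of_neg (neg_neg_of_pos hα))).const_mul y₀
    exact tendsto_infDist_limitCycle hX0 hX2 (tendsto_logisticRadius hμ hr₀) hy
end

section
/- Let n, m be positive natural numbers and let p₁ : ℝⁿ → ℝᵐ, q₁ : ℝⁿ → ℝᵐ, p₂ : ℝᵐ → ℝⁿ, q₂ : ℝᵐ → ℝⁿ be smooth (infinitely differentiable) functions. Define Φ : ℝⁿ × ℝᵐ → ℝⁿ × ℝᵐ by Φ(u₁, u₂) = (v₁, v₂) where v₁ = u₁ ⊙ exp(p₂(u₂)) + q₂(u₂) and v₂ = u₂ ⊙ exp(p₁(v₁)) + q₁(v₁), with ⊙ the componentwise product and exp applied componentwise. Then Φ is a bijection and both Φ and Φ⁻¹ are smooth; i.e., Φ is a diffeomorphism of ℝⁿ × ℝᵐ. -/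
/-- A coupling block built from smooth subnetworks `p₁, p₂, q₁, q₂` is a
diffeomorphism of `ℝⁿ × ℝᵐ`: it is a bijection, it is smooth, and it has a smooth
(two-sided) inverse. -/
theorem coupling_block_diffeomorphism
    (n m : ℕ) (hn : 0 < n) (hm : 0 < m)
    (p₁ q₁ : (Fin n → ℝ) → (Fin m → ℝ))
    (p₂ q₂ : (Fin m → ℝ) → (Fin n → ℝ))
    (hp₁ : ContDiff ℝ (⊤ : ℕ∞) p₁) (hq₁ : ContDiff ℝ (⊤ : ℕ∞) q₁)
    (hp₂ : ContDiff ℝ (⊤ : ℕ∞) p₂) (hq₂ : ContDiff ℝ (⊤ : ℕ∞) q₂)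
    (Φ : (Fin n → ℝ) × (Fin m → ℝ) → (Fin n → ℝ) × (Fin m → ℝ))
    (hΦ : ∀ u : (Fin n → ℝ) × (Fin m → ℝ),
      Φ u = (fun i => u.1 i * Real.exp (p₂ u.2 i) + q₂ u.2 i,
             fun j => u.2 j *
                 Real.exp (p₁ (fun i => u.1 i * Real.exp (p₂ u.2 i) + q₂ u.2 i) j)
               + q₁ (fun i => u.1 i * Real.exp (p₂ u.2 i) + q₂ u.2 i) j)) :
    Function.Bijective Φ ∧ ContDiff ℝ (⊤ : ℕ∞) Φ ∧
      ∃ Ψ : (Fin n → ℝ) × (Fin m → ℝ) → (Fin n → ℝ) × (Fin m → ℝ),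
        Function.LeftInverse Ψ Φ ∧ Function.RightInverse Ψ Φ ∧ ContDiff ℝ (⊤ : ℕ∞) Ψ := by
  classical
  -- inverse map
  set Ψ : (Fin n → ℝ) × (Fin m → ℝ) → (Fin n → ℝ) × (Fin m → ℝ) :=
    fun v =>
      (fun i => (v.1 i - q₂ (fun j => (v.2 j - q₁ v.1 j) * Real.exp (-(p₁ v.1 j))) i) *
          Real.exp (-(p₂ (fun j => (v.2 j - q₁ v.1 j) * Real.exp (-(p₁ v.1 j))) i)),
       fun j => (v.2 j - q₁ v.1 j) * Real.exp (-(p₁ v.1 j))) with hΨdef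
  have hleft : Function.LeftInverse Ψ Φ := by
    intro u
    rw [hΦ u, hΨdef]
    simp only []
    have h2 : (fun j => ((fun j => u.2 j *
          Real.exp (p₁ (fun i => u.1 i * Real.exp (p₂ u.2 i) + q₂ u.2 i) j)
          + q₁ (fun i => u.1 i * Real.exp (p₂ u.2 i) + q₂ u.2 i) j) j
        - q₁ (fun i => u.1 i * Real.exp (p₂ u.2 i) + q₂ u.2 i) j) *
        Real.exp (-(p₁ (fun i => u.1 i * Real.exp (p₂ u.2 i) + q₂ u.2 i) j))) = u.2 := by
      funext j
      simp [mul_assoc, ← Real.exp_add]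
    have := h2
    ext i
    · simp only [this]
      simp [mul_assoc, ← Real.exp_add]
    · exact congrFun h2 i
  have hright : Function.RightInverse Ψ Φ := by
    intro v
    rw [hΨdef, hΦ]
    simp only []
    have h1 : (fun i => ((v.1 i - q₂ (fun j => (v.2 j - q₁ v.1 j) * Real.exp (-(p₁ v.1 j))) i) *
          Real.exp (-(p₂ (fun j => (v.2 j - q₁ v.1 j) * Real.exp (-(p₁ v.1 j))) i))) *
          Real.exp (p₂ (fun j => (v.2 j - q₁ v.1 j) * Real.exp (-(p₁ v.1 j))) i)
          + q₂ (fun j => (v.2 j - q₁ v.1 j) * Real.exp (-(p₁ v.1 j))) i) = v.1 := by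
      funext i
      simp [mul_assoc, ← Real.exp_add]
    ext i
    · exact congrFun h1 i
    · simp only [h1]
      simp [mul_assoc, ← Real.exp_add]
  -- smoothness
  have hA : ContDiff ℝ (⊤ : ℕ∞) fun u : (Fin n → ℝ) × (Fin m → ℝ) =>
      (fun i => u.1 i * Real.exp (p₂ u.2 i) + q₂ u.2 i : Fin n → ℝ) := by
    apply contDiff_pi.2
    intro i
    exact (((contDiff_pi.1 contDiff_fst i).mul
        (Real.contDiff_exp.comp (contDiff_pi.1 (hp₂.comp contDiff_snd) i)))).add
      (contDiff_pi.1 (hq₂.comp contDiff_snd) i)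
  have hΦs : ContDiff ℝ (⊤ : ℕ∞) Φ := by
    have : Φ = fun u => ((fun i => u.1 i * Real.exp (p₂ u.2 i) + q₂ u.2 i : Fin n → ℝ),
        (fun j => u.2 j * Real.exp (p₁ (fun i => u.1 i * Real.exp (p₂ u.2 i) + q₂ u.2 i) j)
          + q₁ (fun i => u.1 i * Real.exp (p₂ u.2 i) + q₂ u.2 i) j : Fin m → ℝ)) := by
      funext u; exact hΦ u
    rw [this]
    refine ContDiff.prodMk hA (contDiff_pi.2 fun j => ?_)
    exact ((contDiff_pi.1 contDiff_snd j).mul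
        (Real.contDiff_exp.comp (contDiff_pi.1 (hp₁.comp hA) j))).add
      (contDiff_pi.1 (hq₁.comp hA) j)
  have hB : ContDiff ℝ (⊤ : ℕ∞) fun v : (Fin n → ℝ) × (Fin m → ℝ) =>
      (fun j => (v.2 j - q₁ v.1 j) * Real.exp (-(p₁ v.1 j)) : Fin m → ℝ) := by
    apply contDiff_pi.2
    intro j
    exact ((contDiff_pi.1 contDiff_snd j).sub (contDiff_pi.1 (hq₁.comp contDiff_fst) j)).mul
      (Real.contDiff_exp.comp (contDiff_pi.1 (hp₁.comp contDiff_fst) j).neg)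
  have hΨs : ContDiff ℝ (⊤ : ℕ∞) Ψ := by
    rw [hΨdef]
    refine ContDiff.prodMk (contDiff_pi.2 fun i => ?_) hB
    exact ((contDiff_pi.1 contDiff_fst i).sub (contDiff_pi.1 (hq₂.comp hB) i)).mul
      (Real.contDiff_exp.comp (contDiff_pi.1 (hp₂.comp hB) i).neg)
  exact ⟨⟨hleft.injective, hright.surjective⟩, hΦs, Ψ, hleft, hright, hΨs⟩
end
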